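/- Let p, q, r, u, v be positive integers and let s be a complex number with Re s > 1. Then the lattice sum ∑ 1/(m^p · n^s · (m+n)^q · (m+2n)^r · (m+3n)^u · (2m+3n)^v), taken over all pairs (m, n) with n ≥ 1 an integer and m a nonzero integer such that m+n ≠ 0, m+2n ≠ 0, m+3n ≠ 0 and 2m+3n ≠ 0, converges and equals ζ₂(p,s,q,r,u,v; G₂) + (−1)^p ζ₂(p,q,s,r,v,u; G₂) + (−1)^{p+q} ζ₂(v,q,r,s,p,u; G₂) + (−1)^{p+q+v} ζ₂(v,r,q,s,u,p; G₂) + (−1)^{p+q+r+v} ζ₂(u,r,s,q,v,p; G₂) + (−1)^{p+q+r+u+v} ζ₂(u,s,r,q,p,v; G₂). -/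

import Mathlib

/-!
The lines `m = 0`, `m + n = 0`, `m + 2n = 0`, `m + 3n = 0`, `2m + 3n = 0` cut the half-plane
`n ≥ 1` into six cones, the Weyl chambers of `G₂`. Each cone is the image of `ℕ+ × ℕ+` under a
unimodular substitution `(a, b) ↦ (m, n)` which permutes the six linear forms
`m, n, m + n, m + 2n, m + 3n, 2m + 3n` up to sign, so on that cone the summand is `±` the summand
of a `G₂` zeta value. All six zeta series converge absolutely, being dominated by
`a^{-(p+u+v)} b^{-Re s}`, so the lattice sum may be split along the chambers.
-/

open Complex

/-- The zeta-function of the root system `G₂` with complex exponents: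
`ζ₂(s₁,…,s₆;G₂) = ∑_{m,n≥1} 1/(m^{s₁} n^{s₂} (m+n)^{s₃} (m+2n)^{s₄} (m+3n)^{s₅} (2m+3n)^{s₆})`,
where the powers are complex powers of positive reals. -/
noncomputable def zetaG2C (s₁ s₂ s₃ s₄ s₅ s₆ : ℂ) : ℂ :=
  ∑' (m : ℕ+) (n : ℕ+),
    1 / (((m : ℕ) : ℂ) ^ s₁ * ((n : ℕ) : ℂ) ^ s₂ * (((m : ℕ) : ℂ) + ((n : ℕ) : ℂ)) ^ s₃ *
      (((m : ℕ) : ℂ) + 2 * ((n : ℕ) : ℂ)) ^ s₄ * (((m : ℕ) : ℂ) + 3 * ((n : ℕ) : ℂ)) ^ s₅ *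
      (2 * ((m : ℕ) : ℂ) + 3 * ((n : ℕ) : ℂ)) ^ s₆)

/-- The index set of the lattice sum: `n ≥ 1`, `m ≠ 0`, `m+n ≠ 0`, `m+2n ≠ 0`, `m+3n ≠ 0`,
`2m+3n ≠ 0`. -/
def latticeCondN (x : ℤ × ℤ) : Prop :=
  1 ≤ x.2 ∧ x.1 ≠ 0 ∧ x.1 + x.2 ≠ 0 ∧ x.1 + 2 * x.2 ≠ 0 ∧ x.1 + 3 * x.2 ≠ 0 ∧
    2 * x.1 + 3 * x.2 ≠ 0

lemma hasSum_prod_of_fintype {β γ α : Type*} [Fintype β] [AddCommMonoid α] [TopologicalSpace α]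
    [ContinuousAdd α] {f : β × γ → α} {g : β → α} (hf : ∀ b, HasSum (fun c => f (b, c)) (g b)) :
    HasSum f (∑ b, g b) := by
  classical
  have hfiber (b : β) : HasSum (fun x : β × γ => if x.1 = b then f x else 0) (g b) := by
    rw [← (Prod.mk_right_injective b).hasSum_iff]
    · simpa [Function.comp_def] using hf b
    · rintro ⟨b', c⟩ hx
      rw [if_neg]
      rintro rfl
      exact hx ⟨c, rfl⟩
  convert hasSum_sum fun b (_ : b ∈ Finset.univ) => hfiber b
  simp

lemma rpow_re_le_norm_natCast_cpow {k : ℕ} {y : ℝ} {w : ℂ} (hy : 0 < y) (hyk : y ≤ k)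
    (hw : 0 ≤ w.re) : y ^ w.re ≤ ‖(k : ℂ) ^ w‖ := by
  rw [norm_natCast_cpow_of_pos (by exact_mod_cast hy.trans_le hyk)]
  exact Real.rpow_le_rpow hy.le hyk hw

lemma inv_neg_pow {K : Type*} [DivisionRing K] (x : K) (k : ℕ) :
    (-x)⁻¹ ^ k = (-1) ^ k * x⁻¹ ^ k := by
  rw [inv_neg, neg_pow]

noncomputable def zetaG2Term (s₁ s₂ s₃ s₄ s₅ s₆ : ℂ) (x : ℕ+ × ℕ+) : ℂ :=
  1 / (((x.1 : ℕ) : ℂ) ^ s₁ * ((x.2 : ℕ) : ℂ) ^ s₂ * (((x.1 : ℕ) : ℂ) + ((x.2 : ℕ) : ℂ)) ^ s₃ *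
    (((x.1 : ℕ) : ℂ) + 2 * ((x.2 : ℕ) : ℂ)) ^ s₄ * (((x.1 : ℕ) : ℂ) + 3 * ((x.2 : ℕ) : ℂ)) ^ s₅ *
    (2 * ((x.1 : ℕ) : ℂ) + 3 * ((x.2 : ℕ) : ℂ)) ^ s₆)

section ZetaG2Term

variable {w₁ w₂ w₃ w₄ w₅ w₆ : ℂ} (h₁ : 0 ≤ w₁.re) (h₂ : 0 ≤ w₂.re) (h₃ : 0 ≤ w₃.re)
  (h₄ : 0 ≤ w₄.re) (h₅ : 0 ≤ w₅.re) (h₆ : 0 ≤ w₆.re)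
include h₁ h₂ h₃ h₄ h₅ h₆

lemma norm_zetaG2Term_le (x : ℕ+ × ℕ+) :
    ‖zetaG2Term w₁ w₂ w₃ w₄ w₅ w₆ x‖ ≤
      ((x.1 : ℝ) ^ (w₁.re + w₅.re + w₆.re))⁻¹ * ((x.2 : ℝ) ^ (w₂.re + w₃.re + w₄.re))⁻¹ := by
  obtain ⟨m, n⟩ := x
  have hm : (0 : ℝ) < m := by exact_mod_cast m.pos
  have hn : (0 : ℝ) < n := by exact_mod_cast n.pos
  rw [zetaG2Term, norm_div, norm_one, ← mul_inv, one_div]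
  refine inv_anti₀ (by positivity) ?_
  simp only [norm_mul]
  calc (m : ℝ) ^ (w₁.re + w₅.re + w₆.re) * (n : ℝ) ^ (w₂.re + w₃.re + w₄.re)
      = (m : ℝ) ^ w₁.re * (n : ℝ) ^ w₂.re * (n : ℝ) ^ w₃.re * (n : ℝ) ^ w₄.re *
          (m : ℝ) ^ w₅.re * (m : ℝ) ^ w₆.re := by
        simp only [Real.rpow_add hm, Real.rpow_add hn]; ring
    _ ≤ _ := by
        gcongr
        · exact_mod_cast rpow_re_le_norm_natCast_cpow (k := m) hm le_rfl h₁
        · exact_mod_cast rpow_re_le_norm_natCast_cpow (k := n) hn le_rfl h₂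
        · exact_mod_cast rpow_re_le_norm_natCast_cpow (k := m + n) hn (by push_cast; linarith) h₃
        · exact_mod_cast
            rpow_re_le_norm_natCast_cpow (k := m + 2 * n) hn (by push_cast; linarith) h₄
        · exact_mod_cast
            rpow_re_le_norm_natCast_cpow (k := m + 3 * n) hm (by push_cast; linarith) h₅
        · exact_mod_cast
            rpow_re_le_norm_natCast_cpow (k := 2 * m + 3 * n) hm (by push_cast; linarith) h₆

lemma hasSum_zetaG2Term (hm : 1 < w₁.re + w₅.re + w₆.re) (hn : 1 < w₂.re + w₃.re + w₄.re) :
    HasSum (zetaG2Term w₁ w₂ w₃ w₄ w₅ w₆) (zetaG2C w₁ w₂ w₃ w₄ w₅ w₆) := by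
  have hpseries {σ : ℝ} (hσ : 1 < σ) : Summable fun k : ℕ+ => ((k : ℝ) ^ σ)⁻¹ :=
    (Real.summable_nat_rpow_inv.mpr hσ).comp_injective PNat.coe_injective
  have hsum : Summable (zetaG2Term w₁ w₂ w₃ w₄ w₅ w₆) :=
    .of_norm <| ((hpseries hm).mul_of_nonneg (hpseries hn) (fun _ => by positivity)
      (fun _ => by positivity)).of_nonneg_of_le (fun _ => norm_nonneg _)
      (norm_zetaG2Term_le h₁ h₂ h₃ h₄ h₅ h₆)
  convert hsum.hasSum using 1
  exact (hsum.tsum_prod' hsum.prod_factor).symm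

end ZetaG2Term

noncomputable def latticeTerm (p q r u v : ℕ) (s : ℂ) (x : ℤ × ℤ) : ℂ :=
  1 / ((x.1 : ℂ) ^ p * (x.2 : ℂ) ^ s * ((x.1 : ℂ) + (x.2 : ℂ)) ^ q *
    ((x.1 : ℂ) + 2 * (x.2 : ℂ)) ^ r * ((x.1 : ℂ) + 3 * (x.2 : ℂ)) ^ u *
    (2 * (x.1 : ℂ) + 3 * (x.2 : ℂ)) ^ v)

def chamberMap : Fin 6 → ℕ+ × ℕ+ → ℤ × ℤ
  | 0, (a, b) => (a, b)
  | 1, (a, b) => (-a, a + b)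
  | 2, (a, b) => (-(a + 3 * b), a + 2 * b)
  | 3, (a, b) => (-(2 * a + 3 * b), a + 2 * b)
  | 4, (a, b) => (-(2 * a + 3 * b), a + b)
  | 5, (a, b) => (-(a + 3 * b), b)

lemma latticeCondN_chamberMap (i : Fin 6) (x : ℕ+ × ℕ+) : latticeCondN (chamberMap i x) := by
  obtain ⟨a, b⟩ := x
  have := a.pos
  have := b.pos
  fin_cases i <;> simp only [chamberMap, latticeCondN] <;> omega

lemma chamberMap_injective :
    Function.Injective fun y : Fin 6 × ℕ+ × ℕ+ => chamberMap y.1 y.2 := by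
  rintro ⟨i, a, b⟩ ⟨j, c, d⟩ h
  have := a.pos; have := b.pos; have := c.pos; have := d.pos
  fin_cases i <;> fin_cases j <;> simp only [chamberMap, Prod.mk.injEq] at h ⊢ <;>
    first
      | omega
      | exact ⟨trivial, PNat.coe_injective (by omega), PNat.coe_injective (by omega)⟩

lemma exists_pnat_coe_eq {z : ℤ} (hz : 0 < z) : ∃ a : ℕ+, ((a : ℕ) : ℤ) = z :=
  ⟨⟨z.toNat, by omega⟩, by simp; omega⟩

lemma exists_chamberMap_eq {x : ℤ × ℤ} (hx : latticeCondN x) :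
    ∃ i a b, chamberMap i (a, b) = x := by
  obtain ⟨m, n⟩ := x
  obtain ⟨hn, h0, h1, h2, h3, h6⟩ := hx
  have hwitness (i : Fin 6) {a b : ℤ} (ha : 0 < a) (hb : 0 < b)
      (h : ∀ a' b' : ℕ+, (a' : ℤ) = a → (b' : ℤ) = b → chamberMap i (a', b') = (m, n)) :
      ∃ i a b, chamberMap i (a, b) = (m, n) := by
    obtain ⟨a', ha'⟩ := exists_pnat_coe_eq ha
    obtain ⟨b', hb'⟩ := exists_pnat_coe_eq hb
    exact ⟨i, a', b', h a' b' ha' hb'⟩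
  by_cases c0 : 0 < m
  · exact hwitness 0 (a := m) (b := n) (by omega) (by omega) fun _ _ _ _ => by
      simp only [chamberMap, Prod.mk.injEq]; omega
  by_cases c1 : 0 < m + n
  · exact hwitness 1 (a := -m) (b := m + n) (by omega) (by omega) fun _ _ _ _ => by
      simp only [chamberMap, Prod.mk.injEq]; omega
  by_cases c2 : 0 < 2 * m + 3 * n
  · exact hwitness 2 (a := 2 * m + 3 * n) (b := -(m + n)) (by omega) (by omega) fun _ _ _ _ => by
      simp only [chamberMap, Prod.mk.injEq]; omega
  by_cases c3 : 0 < m + 2 * n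
  · exact hwitness 3 (a := -(2 * m + 3 * n)) (b := m + 2 * n) (by omega) (by omega)
      fun _ _ _ _ => by simp only [chamberMap, Prod.mk.injEq]; omega
  by_cases c4 : 0 < m + 3 * n
  · exact hwitness 4 (a := m + 3 * n) (b := -(m + 2 * n)) (by omega) (by omega) fun _ _ _ _ => by
      simp only [chamberMap, Prod.mk.injEq]; omega
  exact hwitness 5 (a := -(m + 3 * n)) (b := n) (by omega) (by omega) fun _ _ _ _ => by
    simp only [chamberMap, Prod.mk.injEq]; omega

noncomputable def chamberEquiv : Fin 6 × ℕ+ × ℕ+ ≃ {x : ℤ × ℤ // latticeCondN x} :=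
  Equiv.ofBijective (fun y => ⟨chamberMap y.1 y.2, latticeCondN_chamberMap y.1 y.2⟩)
    ⟨fun _ _ h => chamberMap_injective (congrArg Subtype.val h), fun ⟨_, hx⟩ =>
      let ⟨i, a, b, h⟩ := exists_chamberMap_eq hx
      ⟨(i, a, b), Subtype.ext h⟩⟩

noncomputable def chamberSum (p q r u v : ℕ) (s : ℂ) : Fin 6 → ℂ
  | 0 => (-1) ^ 0 * zetaG2C p s q r u v
  | 1 => (-1) ^ p * zetaG2C p q s r v u
  | 2 => (-1) ^ (p + q) * zetaG2C v q r s p u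
  | 3 => (-1) ^ (p + q + v) * zetaG2C v r q s u p
  | 4 => (-1) ^ (p + q + r + v) * zetaG2C u r s q v p
  | 5 => (-1) ^ (p + q + r + u + v) * zetaG2C u s r q p v

lemma hasSum_latticeTerm_chamberMap {p q r u v : ℕ} {s : ℂ} (hpuv : 1 < p + u + v)
    (hs : 1 < s.re) (i : Fin 6) :
    HasSum (fun x => latticeTerm p q r u v s (chamberMap i x)) (chamberSum p q r u v s i) := by
  have hpuv' : (1 : ℝ) < p + u + v := by exact_mod_cast hpuv
  fin_cases i <;> simp only [chamberSum] <;>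
    refine ((hasSum_zetaG2Term ?_ ?_ ?_ ?_ ?_ ?_ ?_ ?_).mul_left _).congr_fun fun x => ?_
  all_goals first
    | exact (by linarith : 0 ≤ s.re)
    | simp only [natCast_re]; positivity
    | simp only [natCast_re]; linarith [q.cast_nonneg (α := ℝ), r.cast_nonneg (α := ℝ)]
    | simp only [latticeTerm, zetaG2Term, chamberMap, cpow_natCast]
      push_cast
      -- `ring_nf` exposes the forms that the substitution negates; their signs are then pulled out
      ring_nf
      try (simp only [← neg_add', inv_neg_pow]; ring_nf)

theorem latticeSum_eq_six_term_sum_general (p q r u v : ℕ) (hp : 0 < p)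
    (hu : 0 < u) (s : ℂ) (hs : 1 < s.re) :
    Summable (fun x : {x : ℤ × ℤ // latticeCondN x} =>
      1 / ((x.1.1 : ℂ) ^ p * (x.1.2 : ℂ) ^ s * ((x.1.1 : ℂ) + (x.1.2 : ℂ)) ^ q *
        ((x.1.1 : ℂ) + 2 * (x.1.2 : ℂ)) ^ r * ((x.1.1 : ℂ) + 3 * (x.1.2 : ℂ)) ^ u *
        (2 * (x.1.1 : ℂ) + 3 * (x.1.2 : ℂ)) ^ v)) ∧
    ∑' x : {x : ℤ × ℤ // latticeCondN x},
        1 / ((x.1.1 : ℂ) ^ p * (x.1.2 : ℂ) ^ s * ((x.1.1 : ℂ) + (x.1.2 : ℂ)) ^ q *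
          ((x.1.1 : ℂ) + 2 * (x.1.2 : ℂ)) ^ r * ((x.1.1 : ℂ) + 3 * (x.1.2 : ℂ)) ^ u *
          (2 * (x.1.1 : ℂ) + 3 * (x.1.2 : ℂ)) ^ v) =
      zetaG2C p s q r u v + (-1 : ℂ) ^ p * zetaG2C p q s r v u +
        (-1 : ℂ) ^ (p + q) * zetaG2C v q r s p u +
        (-1 : ℂ) ^ (p + q + v) * zetaG2C v r q s u p +
        (-1 : ℂ) ^ (p + q + r + v) * zetaG2C u r s q v p +
        (-1 : ℂ) ^ (p + q + r + u + v) * zetaG2C u s r q p v := by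
  have hsum : HasSum (fun x : {x : ℤ × ℤ // latticeCondN x} => latticeTerm p q r u v s x)
      (∑ i, chamberSum p q r u v s i) :=
    chamberEquiv.hasSum_iff.mp <|
      hasSum_prod_of_fintype (hasSum_latticeTerm_chamberMap (by omega) hs)
  refine ⟨hsum.summable, hsum.tsum_eq.trans ?_⟩
  rw [Fin.sum_univ_six]
  simp only [chamberSum, pow_zero, one_mul]

theorem latticeSum_eq_six_term_sum (p q r u v : ℕ) (hp : 0 < p) (hq : 0 < q) (hr : 0 < r)
    (hu : 0 < u) (hv : 0 < v) (s : ℂ) (hs : 1 < s.re) :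
    Summable (fun x : {x : ℤ × ℤ // latticeCondN x} =>
      1 / ((x.1.1 : ℂ) ^ p * (x.1.2 : ℂ) ^ s * ((x.1.1 : ℂ) + (x.1.2 : ℂ)) ^ q *
        ((x.1.1 : ℂ) + 2 * (x.1.2 : ℂ)) ^ r * ((x.1.1 : ℂ) + 3 * (x.1.2 : ℂ)) ^ u *
        (2 * (x.1.1 : ℂ) + 3 * (x.1.2 : ℂ)) ^ v)) ∧
    ∑' x : {x : ℤ × ℤ // latticeCondN x},
        1 / ((x.1.1 : ℂ) ^ p * (x.1.2 : ℂ) ^ s * ((x.1.1 : ℂ) + (x.1.2 : ℂ)) ^ q *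
          ((x.1.1 : ℂ) + 2 * (x.1.2 : ℂ)) ^ r * ((x.1.1 : ℂ) + 3 * (x.1.2 : ℂ)) ^ u *
          (2 * (x.1.1 : ℂ) + 3 * (x.1.2 : ℂ)) ^ v) =
      zetaG2C p s q r u v + (-1 : ℂ) ^ p * zetaG2C p q s r v u +
        (-1 : ℂ) ^ (p + q) * zetaG2C v q r s p u +
        (-1 : ℂ) ^ (p + q + v) * zetaG2C v r q s u p +
        (-1 : ℂ) ^ (p + q + r + v) * zetaG2C u r s q v p +
        (-1 : ℂ) ^ (p + q + r + u + v) * zetaG2C u s r q p v :=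
  latticeSum_eq_six_term_sum_general p q r u v hp hu s hs
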